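/- Keystone decomposition: suppose PP^T = V S V^T with V ∈ ℝ^{n×d}, V^T V = I_d and S invertible, suppose Ŝ_{RS} is invertible, and suppose the eigen-relation Û_{RS} Ŝ_{RS} = (H(AA^T) − M̂_{RS}) Û_{RS} holds (as it does for the BCJSE output). Then Û_{RS} W_{RS} − V = (H(AA^T) − PP^T − M) V S^{−1} + R_1 + R_2 + R_3 + R_4 + R_5 + R_6 + R_7, where the remainders R_1,…,R_7 are as defined below. -/
import Mathlib


open MeasureTheory ProbabilityTheory Filter Matrix
open scoped BigOperators ENNReal NNReal Topology

noncomputable section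

/-- The hollowing operator `H(M) = M - diag(M)`. -/
def hollow {n : ℕ} (M : Matrix (Fin n) (Fin n) ℝ) : Matrix (Fin n) (Fin n) ℝ :=
  M - Matrix.diagonal fun i => M i i

/-- The two-to-infinity norm `‖A‖_{2→∞} = max_i ‖e_iᵀ A‖₂`. -/
def twoInfNorm {k l : ℕ} (A : Matrix (Fin k) (Fin l) ℝ) : ℝ :=
  ⨆ i : Fin k, Real.sqrt (∑ j, A i j ^ 2)

/-- The Frobenius norm. -/
def frobNorm {k l : ℕ} (A : Matrix (Fin k) (Fin l) ℝ) : ℝ :=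
  Real.sqrt (∑ i, ∑ j, A i j ^ 2)

/-- Quadratic form `xᵀ M x`. -/
def quadForm {n : ℕ} (M : Matrix (Fin n) (Fin n) ℝ) (x : Fin n → ℝ) : ℝ :=
  ∑ i, ∑ j, x i * M i j * x j

/-- The `k`-th largest eigenvalue of a symmetric matrix, via the Courant–Fischer
max–min characterization (maximum over `k`-dimensional subspaces of the minimum
Rayleigh quotient over unit vectors of the subspace). -/
def lambdaK {n : ℕ} (M : Matrix (Fin n) (Fin n) ℝ) (k : ℕ) : ℝ :=
  ⨆ V : {V : Submodule ℝ (Fin n → ℝ) // Module.finrank ℝ V = k},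
    ⨅ x : {x : Fin n → ℝ // x ∈ V.1 ∧ ∑ i, x i ^ 2 = 1}, quadForm M x.1

/-- The `j`-th largest singular value `σ_j(A) = √(λ_j(AᵀA))`. -/
def singVal {k l : ℕ} (A : Matrix (Fin k) (Fin l) ℝ) (j : ℕ) : ℝ :=
  Real.sqrt (lambdaK (Aᵀ * A) j)

/-- Spectral norm (largest singular value). -/
def specNorm {k l : ℕ} (A : Matrix (Fin k) (Fin l) ℝ) : ℝ := singVal A 1

/-- `W` is a matrix sign of `H`, i.e. `W = W₁W₂ᵀ` for some SVD `H = W₁ Σ W₂ᵀ`. -/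
def IsMatrixSign {d : ℕ} (H W : Matrix (Fin d) (Fin d) ℝ) : Prop :=
  ∃ W₁ W₂ : Matrix (Fin d) (Fin d) ℝ, ∃ σv : Fin d → ℝ,
    W₁ᵀ * W₁ = 1 ∧ W₂ᵀ * W₂ = 1 ∧ (∀ i, 0 ≤ σv i) ∧
    H = W₁ * Matrix.diagonal σv * W₂ᵀ ∧ W = W₁ * W₂ᵀ

/-- `Uh = eigs(M; d)` with the vector `Λ` of associated eigenvalues: `Uh` has orthonormal
columns, its columns are eigenvectors of `M`, and the associated eigenvalues are the `d`
largest eigenvalues of `M`. -/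
def IsEigsWith {n d : ℕ} (M : Matrix (Fin n) (Fin n) ℝ)
    (Uh : Matrix (Fin n) (Fin d) ℝ) (Λ : Fin d → ℝ) : Prop :=
  Uhᵀ * Uh = 1 ∧ M * Uh = Uh * Matrix.diagonal Λ ∧ ∀ k : Fin d, Λ k = lambdaK M (k.1 + 1)

/-- `Uh = eigs(M; d)`. -/
def IsEigs {n d : ℕ} (M : Matrix (Fin n) (Fin n) ℝ)
    (Uh : Matrix (Fin n) (Fin d) ℝ) : Prop :=
  ∃ Λ : Fin d → ℝ, IsEigsWith M Uh Λ

/-- `X_n = Õ_p(Y_n)` : for every `c > 0` there are constants `C_c, K_c, N_c` such that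
`ℙ(X_n > C_c Y_n) ≤ K_c (m+n)^{-c}` for all `n ≥ N_c` (the bound `Y` may be random). -/
def TildeOp {Ω : ℕ → Type} [∀ n, MeasurableSpace (Ω n)] (μ : ∀ n, Measure (Ω n))
    (mseq : ℕ → ℕ) (X Y : ∀ n, Ω n → ℝ) : Prop :=
  ∀ c : ℝ, 0 < c → ∃ C : ℝ, 0 < C ∧ ∃ K : ℝ, 0 < K ∧ ∃ N : ℕ, ∀ n, N ≤ n →
    μ n {ω | C * Y n ω < X n ω} ≤ ENNReal.ofReal (K * ((mseq n + n : ℕ) : ℝ) ^ (-c))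

/-- `X_n = õ_p(Y_n)` : `X_n = Õ_p(ε_n Y_n)` for some nonnegative `ε_n → 0`. -/
def TildeSmallOp {Ω : ℕ → Type} [∀ n, MeasurableSpace (Ω n)] (μ : ∀ n, Measure (Ω n))
    (mseq : ℕ → ℕ) (X Y : ∀ n, Ω n → ℝ) : Prop :=
  ∃ ε : ℕ → ℝ, (∀ n, 0 ≤ ε n) ∧ Tendsto ε atTop (𝓝 0) ∧
    TildeOp μ mseq X fun n ω => ε n * Y n ω

/-- A sequence of events holds with high probability: for every `c > 0`,
`ℙ(not Q_n) = O((m+n)^{-c})`. -/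
def WHP {Ω : ℕ → Type} [∀ n, MeasurableSpace (Ω n)] (μ : ∀ n, Measure (Ω n))
    (mseq : ℕ → ℕ) (Q : ∀ n, Ω n → Prop) : Prop :=
  ∀ c : ℝ, 0 < c → ∃ K : ℝ, 0 < K ∧ ∃ N : ℕ, ∀ n, N ≤ n →
    μ n {ω | ¬ Q n ω} ≤ ENNReal.ofReal (K * ((mseq n + n : ℕ) : ℝ) ^ (-c))

/-- `f_n = O(g_n)`. -/
def seqBigO (f g : ℕ → ℝ) : Prop :=
  ∃ C : ℝ, 0 < C ∧ ∃ N : ℕ, ∀ n, N ≤ n → |f n| ≤ C * g n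

/-- `f_n = Θ(g_n)` (for nonnegative sequences). -/
def seqTheta (f g : ℕ → ℝ) : Prop := seqBigO f g ∧ seqBigO g f

/-- `f_n = Ω(g_n)` (for nonnegative sequences). -/
def seqBigOmega (f g : ℕ → ℝ) : Prop :=
  ∃ c : ℝ, 0 < c ∧ ∃ N : ℕ, ∀ n, N ≤ n → c * g n ≤ f n

/-- `f_n = ω(g_n)` (for nonnegative sequences). -/
def seqLittleOmega (f g : ℕ → ℝ) : Prop :=
  ∀ C : ℝ, 0 < C → ∃ N : ℕ, ∀ n, N ≤ n → C * g n ≤ f n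

/-- **keystone decomposition.** Suppose `PPᵀ = V S Vᵀ` with `VᵀV = I_d` and `S`
invertible, `Ŝ_{RS} = diag(Λ)` is invertible, `W_{RS}` is orthogonal, `Û_{RS}` has orthonormal
columns, and the eigen-relation `Û_{RS} Ŝ_{RS} = (H(AAᵀ) − M̂_{RS}) Û_{RS}` holds (as it does
for the BCJSE output).  Then
`Û_{RS} W_{RS} − V = (H(AAᵀ) − PPᵀ − M) V S⁻¹ + R₁ + R₂ + R₃ + R₄ + R₅ + R₆ + R₇`,
where `R₁, …, R₇` are the remainder matrices of the paper. -/
theorem keystone_decomposition (n d mm : ℕ)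
    (A P : Fin mm → Matrix (Fin n) (Fin n) ℝ)
    (M Mhat : Matrix (Fin n) (Fin n) ℝ)
    (Uhat V : Matrix (Fin n) (Fin d) ℝ)
    (Λ : Fin d → ℝ)
    (S W : Matrix (Fin d) (Fin d) ℝ)
    (Shat : Matrix (Fin d) (Fin d) ℝ)
    (hShat : Shat = Matrix.diagonal Λ)
    (Nmat : Matrix (Fin n) (Fin n) ℝ)
    (hN : Nmat = hollow (∑ t : Fin mm, A t * (A t)ᵀ) - (∑ t : Fin mm, P t * (P t)ᵀ) - M)
    (hUhat : Uhatᵀ * Uhat = 1)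
    (hV : Vᵀ * V = 1)
    (hPP : (∑ t : Fin mm, P t * (P t)ᵀ) = V * S * Vᵀ)
    (hS : IsUnit S.det)
    (hShatInv : IsUnit Shat.det)
    (hW : Wᵀ * W = 1)
    (hEig : Uhat * Shat = (hollow (∑ t : Fin mm, A t * (A t)ᵀ) - Mhat) * Uhat) :
    Uhat * W - V
      = Nmat * V * S⁻¹
        + Nmat * (Uhat - V * Wᵀ) * Shat⁻¹ * W
        + (M - Mhat) * V * S⁻¹
        + (M - Mhat) * (Uhat - V * Wᵀ) * Shat⁻¹ * W
        + V * (S * Vᵀ * Uhat - Vᵀ * Uhat * Shat) * Shat⁻¹ * W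
        + V * (Vᵀ * Uhat - Wᵀ) * W
        + Nmat * V * (Wᵀ * Shat⁻¹ - S⁻¹ * Wᵀ) * W
        + (M - Mhat) * V * (Wᵀ * Shat⁻¹ - S⁻¹ * Wᵀ) * W := by
  have hSh : Shat * Shat⁻¹ = 1 := Matrix.mul_nonsing_inv _ hShatInv
  set E := hollow (∑ t : Fin mm, A t * (A t)ᵀ) with hE
  have hEig' : ∀ X : Matrix (Fin d) (Fin d) ℝ,
      E * (Uhat * X) = Uhat * (Shat * X) + Mhat * (Uhat * X) := by
    intro X
    have h1 : (E - Mhat) * Uhat = Uhat * Shat := hEig.symm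
    have h2 : E * Uhat = Uhat * Shat + Mhat * Uhat := by
      have := h1
      rw [Matrix.sub_mul] at this
      linear_combination (norm := noncomm_ring) this
    calc E * (Uhat * X) = (E * Uhat) * X := by rw [Matrix.mul_assoc]
      _ = (Uhat * Shat + Mhat * Uhat) * X := by rw [h2]
      _ = Uhat * (Shat * X) + Mhat * (Uhat * X) := by
          rw [Matrix.add_mul, Matrix.mul_assoc, Matrix.mul_assoc]
  have hShW : Shat * (Shat⁻¹ * W) = W := by
    rw [← Matrix.mul_assoc, hSh, Matrix.one_mul]
  subst hN
  rw [hPP]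
  simp only [Matrix.sub_mul, Matrix.mul_sub, Matrix.add_mul, Matrix.mul_add,
    Matrix.mul_assoc, hEig', hShW, hW, Matrix.mul_one]
  abel
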